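/- arXiv:1801.05979 — 3 statements merged into one kernel-verified Lean document; each statement's English description precedes it below -/
import Mathlib

section
/- Let C be a skeletally small abelian category and S a Serre subcategory of C. An object T of C is a simple object of the Gabriel quotient category C/S if and only if T is S-simple, i.e. T does not belong to S and for every subobject T' of T in C either T' belongs to S or T/T' belongs to S. -/
open CategoryTheory Limits

universe v u v₂ u₂

namespace KGPaper

variable {C : Type u} [Category.{v} C] [Abelian C]

/-- A Serre subcategory of an abelian category, given as a predicate on objects:
it contains the zero objects and, for any short exact sequence, the middle term
satisfies the predicate iff the outer terms do. -/
structure IsSerre {C : Type u} [Category.{v} C] [Abelian C] (P : C → Prop) : Prop where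
  zero : ∀ X : C, IsZero X → P X
  ses : ∀ S : ShortComplex C, S.ShortExact → (P S.X₂ ↔ P S.X₁ ∧ P S.X₃)

/-- The class of `P`-isomorphisms: morphisms whose kernel and cokernel satisfy `P`.
The Gabriel quotient `C/P` is (2-universally) the localization of `C` at this class. -/
def serreW {C : Type u} [Category.{v} C] [Abelian C] (P : C → Prop) :
    MorphismProperty C :=
  fun _ _ f => P (kernel f) ∧ P (cokernel f)

/-- An object `T` is `P`-simple (`S`-simple for the Serre subcategory `S = P`) if
`T ∉ P` and for every subobject `T'` of `T`, either `T' ∈ P` or `T/T' ∈ P`. -/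
def IsRelSimple {C : Type u} [Category.{v} C] [Abelian C] (P : C → Prop) (T : C) : Prop :=
  ¬ P T ∧ ∀ T' : Subobject T, P (T' : C) ∨ P (cokernel T'.arrow)

/-- There is a chain of subobjects `0 = T₀ ⊆ T₁ ⊆ ... ⊆ Tₙ = T` all of whose successive
quotients `T_{i+1}/T_i` satisfy the predicate `Q`. -/
def HasChainWith {C : Type u} [Category.{v} C] [Abelian C] (Q : C → Prop) (T : C) : Prop :=
  ∃ (n : ℕ) (c : Fin (n + 1) → Subobject T) (hc : ∀ i : Fin n, c i.castSucc ≤ c i.succ),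
    c 0 = ⊥ ∧ c (Fin.last n) = ⊤ ∧
    ∀ i : Fin n, Q (cokernel (Subobject.ofLE _ _ (hc i)))

/-- An object of an abelian category has finite length if it has a composition series,
i.e. a finite chain of subobjects with simple successive quotients. -/
def FiniteLength {C : Type u} [Category.{v} C] [Abelian C] (T : C) : Prop :=
  HasChainWith (fun Z => Simple Z) T

end KGPaper

namespace KGPaper

/-- `T : C` becomes a simple object in the Gabriel quotient `C/P`: there is an
abelian category `D` together with an exact localization functor `q : C ⥤ D`
at the class of `P`-isomorphisms (this is, up to equivalence, the Gabriel
quotient together with its quotient functor) such that `q.obj T` is simple. -/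
def SimpleInQuotient {C : Type u} [Category.{v} C] [Abelian C] (P : C → Prop) (T : C) : Prop :=
  ∃ (D : Type (max u v)) (_ : Category.{max u v} D) (_ : Abelian D)
    (q : C ⥤ D) (_ : q.Additive) (_ : PreservesFiniteLimits q)
    (_ : PreservesFiniteColimits q) (_ : q.IsLocalization (serreW P)),
      Simple (q.obj T)

/-- `T : C` has finite length in the Gabriel quotient `C/P`. -/
def FiniteLengthInQuotient {C : Type u} [Category.{v} C] [Abelian C] (P : C → Prop)
    (T : C) : Prop :=
  ∃ (D : Type (max u v)) (_ : Category.{max u v} D) (_ : Abelian D)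
    (q : C ⥤ D) (_ : q.Additive) (_ : PreservesFiniteLimits q)
    (_ : PreservesFiniteColimits q) (_ : q.IsLocalization (serreW P)),
      FiniteLength (q.obj T)

/-- The Krull-Gabriel filtration of an abelian category `C`:
`C_{-1} = 0` (the zero objects) and `C_{n+1}` consists of the objects of finite
length in the Gabriel quotient `C/C_n`.  Here `kgFilt C n` is `C_n` for `n : ℕ`,
so `kgFilt C 0` consists of the objects of finite length in `C ≅ C/C_{-1}`. -/
def kgFilt (C : Type u) [Category.{v} C] [Abelian C] : ℕ → (C → Prop)
  | 0 => FiniteLengthInQuotient (fun X : C => IsZero X)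
  | n + 1 => FiniteLengthInQuotient (kgFilt C n)

/-- The Krull-Gabriel filtration indexed by `ℕ ∪ {-1}`, where the index `m : ℕ`
stands for `n = m - 1`; thus `kgFiltM C 0` is `C_{-1} = 0` and
`kgFiltM C (n+1)` is `C_n`. -/
def kgFiltM (C : Type u) [Category.{v} C] [Abelian C] : ℕ → (C → Prop)
  | 0 => fun X : C => IsZero X
  | n + 1 => kgFilt C n

/-- The Krull-Gabriel dimension of an abelian category `C`: the least `n : ℕ` with
`C_n = C` if such an `n` exists, and `∞` (here `⊤ : ℕ∞`) otherwise. -/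
noncomputable def kgDim (C : Type u) [Category.{v} C] [Abelian C] : ℕ∞ :=
  sInf ((fun m : ℕ => (m : ℕ∞)) '' { m : ℕ | ∀ T : C, kgFilt C m T })

end KGPaper

/-!
For a monomorphism `i : T' ⟶ T`, the morphism `q.map i` is zero iff `T' ∈ S`, and an
isomorphism iff `T/T' ∈ S`. By the calculus of right fractions every subobject of `q T` is,
up to isomorphism, the image of a subobject of `T`. Hence `q T` is simple iff
`T/T' ∈ S ↔ T' ∉ S` for every subobject `T'`, and since `S` is closed under extensions this is
exactly `S`-simplicity of `T`.
-/

namespace CategoryTheory.ObjectProperty.SerreClassLocalization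

variable {C : Type u} [Category.{v} C] [Abelian C] {D : Type u₂} [Category.{v₂} D] [Preadditive D]
  (L : C ⥤ D) (P : ObjectProperty C) [P.IsSerreClass] [L.Additive] [L.IsLocalization P.isoModSerre]

lemma map_eq_zero_iff_of_mono {T' T : C} (i : T' ⟶ T) [Mono i] : L.map i = 0 ↔ P T' := by
  simpa using map_comp_eq_zero_iff_of_epi_mono L P (𝟙 T') i

lemma isIso_map_iff_of_mono {T' T : C} (i : T' ⟶ T) [Mono i] :
    IsIso (L.map i) ↔ P (cokernel i) := by
  refine ⟨fun _ ↦ (epi_map_iff L P i).mp inferInstance, fun h ↦ ?_⟩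
  exact Localization.inverts L P.isoModSerre i (P.isoModSerre_of_mono i h)

include L P in
-- Write `f` as a right fraction `g s⁻¹`; the image of `g` is the required subobject of `T`.
lemma exists_mono_iso_hom_comp_eq_map {A : D} {T : C} (f : A ⟶ L.obj T) [Mono f] :
    ∃ (T' : C) (i : T' ⟶ T) (_ : Mono i) (e : L.obj T' ≅ A), e.hom ≫ f = L.map i := by
  have := Localization.essSurj L P.isoModSerre
  have := preservesMonomorphisms L P
  let eA := L.objObjPreimageIso A
  obtain ⟨φ, hφ⟩ := Localization.exists_rightFraction L P.isoModSerre (eA.hom ≫ f)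
  have hmap : L.map φ.f = L.map φ.s ≫ eA.hom ≫ f := by
    rw [hφ, MorphismProperty.RightFraction.map_s_comp_map]
  have := Localization.inverts L P.isoModSerre φ.s φ.hs
  have hmono : P.monoModSerre φ.f := by
    rw [← mono_map_iff L P, hmap]
    infer_instance
  have := Localization.inverts L P.isoModSerre _ hmono.isoModSerre_factorThruImage
  refine ⟨_, Abelian.image.ι φ.f, inferInstance,
    (asIso (L.map (Abelian.factorThruImage φ.f))).symm ≪≫ asIso (L.map φ.s) ≪≫ eA, ?_⟩
  simp [← hmap, ← L.map_comp]

lemma simple_obj_iff (T : C) :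
    Simple (L.obj T) ↔ ∀ ⦃T' : C⦄ (i : T' ⟶ T) [Mono i], P (cokernel i) ↔ ¬ P T' := by
  have := preservesMonomorphisms L P
  refine ⟨fun _ T' i _ ↦ ?_, fun h ↦ ⟨fun {A} f _ ↦ ?_⟩⟩
  · rw [← isIso_map_iff_of_mono L P i, ← map_eq_zero_iff_of_mono L P i]
    exact Simple.mono_isIso_iff_nonzero (L.map i)
  · obtain ⟨T', i, _, e, he⟩ := exists_mono_iso_hom_comp_eq_map L P f
    rw [← isIso_comp_left_iff e.hom, he, isIso_map_iff_of_mono L P i, h i,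
      ← map_eq_zero_iff_of_mono L P i, ← he, Preadditive.IsIso.comp_left_eq_zero]

end CategoryTheory.ObjectProperty.SerreClassLocalization

namespace KGPaper

variable {C : Type u} [Category.{v} C] [Abelian C]

lemma IsSerre.isSerreClass {P : C → Prop} (hP : IsSerre P) : ObjectProperty.IsSerreClass P where
  exists_zero := ⟨_, isZero_zero C, hP.zero _ (isZero_zero C)⟩
  prop_of_mono f _ hY := ((hP.ses _ { exact := ShortComplex.exact_cokernel f }).mp hY).1
  prop_of_epi f _ hX := ((hP.ses _ { exact := ShortComplex.exact_kernel f }).mp hX).2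
  prop_X₂_of_shortExact hS h₁ h₃ := (hP.ses _ hS).mpr ⟨h₁, h₃⟩

lemma isRelSimple_iff_forall_mono (P : ObjectProperty C) [P.IsSerreClass] (T : C) :
    IsRelSimple P T ↔ ∀ ⦃T' : C⦄ (i : T' ⟶ T) [Mono i], P (cokernel i) ↔ ¬ P T' := by
  constructor
  · rintro ⟨hT, hsub⟩ T' i _
    have hsub_or_quot : P T' ∨ P (cokernel i) := by
      obtain h | h := hsub (Subobject.mk i)
      · exact .inl (P.prop_of_iso (Subobject.underlyingIso i) h)
      · exact .inr (P.prop_of_iso (cokernel.mapIso _ i (Subobject.underlyingIso i) (Iso.refl T)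
          (by simp)) h)
    have not_both : ¬ (P T' ∧ P (cokernel i)) := fun ⟨h₁, h₃⟩ ↦
      hT (P.prop_X₂_of_exact (ShortComplex.exact_cokernel i) h₁ h₃)
    tauto
  · intro h
    refine ⟨(h (𝟙 T)).mp (P.prop_of_isZero (isZero_cokernel_of_epi _)), fun T' ↦ ?_⟩
    exact or_iff_not_imp_left.mpr (h T'.arrow).mpr

theorem simple_in_serre_quotient_iff_relSimple_general
    {C : Type u} [Category.{v} C] [Abelian C]
    {D : Type u₂} [Category.{v₂} D] [Abelian D]
    (P : C → Prop) (hP : IsSerre P)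
    (q : C ⥤ D) [q.Additive]
    (hq : q.IsLocalization (serreW P))
    (T : C) :
    Simple (q.obj T) ↔ IsRelSimple P T := by
  have := hP.isSerreClass
  have : q.IsLocalization (ObjectProperty.isoModSerre P) := hq
  rw [ObjectProperty.SerreClassLocalization.simple_obj_iff q P, isRelSimple_iff_forall_mono]

/-- Let `C` be a skeletally small abelian category and `S` (here the
predicate `P`) a Serre subcategory of `C`.  Let `q : C ⥤ D` be the Gabriel quotient
functor onto the quotient category `C/S` (an abelian category, realized as the exact
localization of `C` at the class of `S`-isomorphisms).  An object `T` of `C` is a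
simple object of `C/S` if and only if `T` is `S`-simple, i.e. `T ∉ S` and for every
subobject `T'` of `T` in `C` either `T' ∈ S` or `T/T' ∈ S`. -/
theorem simple_in_serre_quotient_iff_relSimple
    {C : Type u} [Category.{v} C] [Abelian C] [EssentiallySmall.{v} C]
    {D : Type u₂} [Category.{v₂} D] [Abelian D]
    (P : C → Prop) (hP : IsSerre P)
    (q : C ⥤ D) [q.Additive] [PreservesFiniteLimits q] [PreservesFiniteColimits q]
    (hq : q.IsLocalization (serreW P))
    (T : C) :
    Simple (q.obj T) ↔ IsRelSimple P T :=
  simple_in_serre_quotient_iff_relSimple_general P hP q hq T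

end KGPaper
end

section
/- Let C and D be skeletally small abelian categories with Krull–Gabriel filtrations (C_n)_{n∈ℕ} and (D_n)_{n∈ℕ}, and let F : C → D be an exact functor. Assume that (i) for every object U of D there exist an object T of C and an epimorphism ε : F(T) → U, and (ii) for all T in C and n ∈ ℕ, T ∈ C_n if and only if F(T) ∈ D_n. Then KG(C) = KG(D). -/
open CategoryTheory Limits

universe v u v₂ u₂

/-
Since `T ∈ C_n ↔ F(T) ∈ D_n`, the condition `C_n = C` says exactly that `D_n` contains every
`F(T)`. Every object of `D` is a quotient of some `F(T)`, so this is equivalent to `D_n = D`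
once we know that each `D_n` is closed under quotients. That holds because the Gabriel quotient
functor is exact and finite length passes to quotients: the image of a composition series is a
chain whose factors are quotients of simple objects, hence simple or zero, and the zero steps
can be dropped.
-/

open Relation

namespace KGPaper

section FinChain

variable {α : Type*} {r : α → α → Prop}

theorem reflTransGen_of_finChain {n : ℕ} (c : Fin (n + 1) → α)
    (hc : ∀ i : Fin n, ReflGen r (c i.castSucc) (c i.succ)) :
    ReflTransGen r (c 0) (c (Fin.last n)) := by
  suffices ∀ k : Fin (n + 1), ReflTransGen r (c 0) (c k) from this _
  intro k
  induction k using Fin.induction with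
  | zero => exact .refl
  | succ i ih => exact ih.trans (hc i).to_reflTransGen

theorem exists_finChain_of_reflTransGen {a b : α} (h : ReflTransGen r a b) :
    ∃ (n : ℕ) (c : Fin (n + 1) → α), c 0 = a ∧ c (Fin.last n) = b ∧
      ∀ i : Fin n, r (c i.castSucc) (c i.succ) := by
  induction h with
  | refl => exact ⟨0, fun _ => a, rfl, rfl, fun i => i.elim0⟩
  | @tail x y _ hxy ih =>
    obtain ⟨n, c, h0, hl, hc⟩ := ih
    refine ⟨n + 1, Fin.snoc c y, by simpa using h0, by simp, fun i => ?_⟩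
    induction i using Fin.lastCases with
    | last => simpa [hl] using hxy
    | cast i => simpa only [Fin.succ_castSucc, Fin.snoc_castSucc] using hc i

end FinChain

section Abelian

variable {C : Type u} [Category.{v} C] [Abelian C]

def QuotientStep (Q : C → Prop) {T : C} (a b : Subobject T) : Prop :=
  ∃ h : a ≤ b, Q (cokernel (Subobject.ofLE a b h))

theorem hasChainWith_iff_reflTransGen (Q : C → Prop) (T : C) :
    HasChainWith Q T ↔ ReflTransGen (QuotientStep Q) (⊥ : Subobject T) ⊤ := by
  constructor
  · rintro ⟨n, c, hc, h0, hl, hQ⟩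
    rw [← h0, ← hl]
    exact reflTransGen_of_finChain c fun i => .single ⟨hc i, hQ i⟩
  · intro h
    obtain ⟨n, c, h0, hl, hc⟩ := exists_finChain_of_reflTransGen h
    exact ⟨n, c, fun i => (hc i).1, h0, hl, fun i => (hc i).2⟩

theorem Subobject.eq_of_isZero_cokernel_ofLE {T : C} {a b : Subobject T} (h : a ≤ b)
    (hz : IsZero (cokernel (Subobject.ofLE a b h))) : a = b := by
  have : Epi (Subobject.ofLE a b h) := Preadditive.epi_of_isZero_cokernel _ hz
  have : IsIso (Subobject.ofLE a b h) := isIso_of_mono_of_epi _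
  refine le_antisymm h (Subobject.le_of_comm (inv (Subobject.ofLE a b h)) ?_)
  rw [IsIso.inv_comp_eq, Subobject.ofLE_arrow]

theorem simple_or_isZero_of_epi {X Y : C} [Simple X] (f : X ⟶ Y) [Epi f] :
    Simple Y ∨ IsZero Y := by
  by_cases hf : f = 0
  · subst hf
    exact .inr (IsZero.of_epi_zero X Y)
  · have := isIso_of_epi_of_nonzero hf
    exact .inl (Simple.of_iso (asIso f).symm)

theorem imageSubobject_arrow_comp_le_of_le {X U : C} (p : X ⟶ U) {a b : Subobject X}
    (h : a ≤ b) :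
    imageSubobject (a.arrow ≫ p) ≤ imageSubobject (b.arrow ≫ p) := by
  rw [← Subobject.ofLE_arrow h, Category.assoc]
  exact imageSubobject_comp_le _ _

theorem reflGen_quotientStep_simple_imageSubobject {X U : C} (p : X ⟶ U) {a b : Subobject X}
    (h : QuotientStep (fun Z => Simple Z) a b) :
    ReflGen (QuotientStep (fun Z => Simple Z))
      (imageSubobject (a.arrow ≫ p)) (imageSubobject (b.arrow ≫ p)) := by
  obtain ⟨hab, hsimple⟩ := h
  have hle := imageSubobject_arrow_comp_le_of_le p hab
  have hsq : Subobject.ofLE a b hab ≫ factorThruImageSubobject (b.arrow ≫ p) =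
      factorThruImageSubobject (a.arrow ≫ p) ≫ Subobject.ofLE _ _ hle := by
    simp [← cancel_mono (imageSubobject (b.arrow ≫ p)).arrow]
  -- `b/a ⟶ p(b)/p(a)` is epi because `b ⟶ p(b)` is.
  rcases simple_or_isZero_of_epi (cokernel.map _ _ _ _ hsq) with hs | hz
  · exact .single ⟨hle, hs⟩
  · rw [Subobject.eq_of_isZero_cokernel_ofLE hle hz]

theorem imageSubobject_eq_top_of_epi {X Y : C} (f : X ⟶ Y) [Epi f] : imageSubobject f = ⊤ := by
  have : Epi (image.ι f) := epi_image_of_epi f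
  have : IsIso (image.ι f) := isIso_of_mono_of_epi _
  exact (Subobject.isIso_iff_mk_eq_top _).mp inferInstance

theorem FiniteLength.of_epi {X U : C} (p : X ⟶ U) [Epi p] (h : FiniteLength X) :
    FiniteLength U := by
  rw [FiniteLength, hasChainWith_iff_reflTransGen] at h ⊢
  have h_bot : imageSubobject ((⊥ : Subobject X).arrow ≫ p) = ⊥ := by
    simp [Subobject.bot_arrow, imageSubobject_zero]
  have h_top : imageSubobject ((⊤ : Subobject X).arrow ≫ p) = ⊤ :=
    imageSubobject_eq_top_of_epi _
  rw [← h_bot, ← h_top]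
  exact h.lift' (fun a => imageSubobject (a.arrow ≫ p))
    fun _ _ hab => (reflGen_quotientStep_simple_imageSubobject p hab).to_reflTransGen

theorem FiniteLengthInQuotient.of_epi {P : C → Prop} {X U : C} (f : X ⟶ U) [Epi f]
    (h : FiniteLengthInQuotient P X) : FiniteLengthInQuotient P U := by
  obtain ⟨D, _, _, q, hadd, hlim, hcolim, hloc, hq⟩ := h
  exact ⟨D, _, _, q, hadd, hlim, hcolim, hloc, hq.of_epi (q.map f)⟩

theorem kgFilt_of_epi (n : ℕ) {X U : C} (f : X ⟶ U) [Epi f] (h : kgFilt C n X) :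
    kgFilt C n U := by
  cases n <;> exact FiniteLengthInQuotient.of_epi f h

end Abelian

theorem kgDim_eq_of_exact_functor_general
    {C : Type u} [Category.{v} C] [Abelian C]
    {D : Type u₂} [Category.{v₂} D] [Abelian D]
    (F : C ⥤ D)
    (hsurj : ∀ U : D, ∃ (T : C) (ε : F.obj T ⟶ U), Epi ε)
    (hiff : ∀ (T : C) (n : ℕ), kgFilt C n T ↔ kgFilt D n (F.obj T)) :
    kgDim C = kgDim D := by
  have hfilt (n : ℕ) : (∀ T : C, kgFilt C n T) ↔ ∀ U : D, kgFilt D n U := by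
    refine ⟨fun hC U => ?_, fun hD T => (hiff T n).2 (hD (F.obj T))⟩
    obtain ⟨T, ε, _⟩ := hsurj U
    exact kgFilt_of_epi n ε ((hiff T n).1 (hC T))
  simp only [kgDim, hfilt]

/-- Let `C`, `D` be skeletally small abelian categories with
Krull-Gabriel filtrations `(C_n)`, `(D_n)` and let `F : C ⥤ D` be an exact functor.
Assume (i) every object `U` of `D` admits an epimorphism `ε : F(T) → U` with `T` in
`C`, and (ii) `T ∈ C_n` if and only if `F(T) ∈ D_n`, for all `T` and `n`.
Then `KG(C) = KG(D)`. -/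
theorem kgDim_eq_of_exact_functor
    {C : Type u} [Category.{v} C] [Abelian C] [EssentiallySmall.{v} C]
    {D : Type u₂} [Category.{v₂} D] [Abelian D] [EssentiallySmall.{v₂} D]
    (F : C ⥤ D) [F.Additive] [PreservesFiniteLimits F] [PreservesFiniteColimits F]
    (hsurj : ∀ U : D, ∃ (T : C) (ε : F.obj T ⟶ U), Epi ε)
    (hiff : ∀ (T : C) (n : ℕ), kgFilt C n T ↔ kgFilt D n (F.obj T)) :
    kgDim C = kgDim D :=
  kgDim_eq_of_exact_functor_general F hsurj hiff

end KGPaper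
end

section
/- Let R be a locally bounded K-category and B a convex full subcategory of R. Then mod(B), identified with its image in mod(R) under the (fully faithful, exact) extension-by-zeros functor, is a contravariantly finite subcategory of mod(R). -/
open CategoryTheory Limits Opposite

universe u

namespace KGPaper

/-! ### Locally bounded `K`-categories and their finite dimensional modules -/

/-- A locally bounded `K`-category: a `K`-linear category in which distinct objects are
nonisomorphic, all endomorphism algebras are local, and for every object `x` both
`∑_y dim_K R(x,y)` and `∑_y dim_K R(y,x)` are finite (i.e. all hom spaces are finite
dimensional and, for fixed `x`, only finitely many of them are nonzero). -/
class LocallyBounded (K : Type u) [Field K] (R : Type u) [Category.{u} R]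
    [Preadditive R] [CategoryTheory.Linear K R] : Prop where
  eq_of_iso : ∀ {x y : R}, Nonempty (x ≅ y) → x = y
  localEnd : ∀ x : R, IsLocalRing (End x)
  finiteDimensionalHom : ∀ x y : R, FiniteDimensional K (x ⟶ y)
  finiteOut : ∀ x : R, {y : R | ∃ f : x ⟶ y, f ≠ 0}.Finite
  finiteIn : ∀ x : R, {y : R | ∃ f : y ⟶ x, f ≠ 0}.Finite

/-- The category `Mod(R)` of all right `R`-modules, i.e. contravariant `K`-linear
functors from `R` to `K`-vector spaces. -/
abbrev BigMod (K : Type u) [Field K] (R : Type u) [Category.{u} R] :=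
  Rᵒᵖ ⥤ ModuleCat.{u} K

/-- An `R`-module is finite dimensional if it is additive and `K`-linear, all its values
are finite dimensional and only finitely many of them are nonzero
(so that `∑_x dim_K M(x) < ∞`). -/
def IsFdModule (K : Type u) [Field K] {R : Type u} [Category.{u} R]
    [Preadditive R] [CategoryTheory.Linear K R] (M : BigMod K R) : Prop :=
  M.Additive ∧ (∀ {x y : R} (c : K) (f : x ⟶ y), M.map ((c • f).op) = c • M.map f.op) ∧
    (∀ x : Rᵒᵖ, FiniteDimensional K (M.obj x)) ∧
    {x : R | ¬ IsZero (M.obj (op x))}.Finite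

/-- The category `mod(R)` of finite dimensional `R`-modules. -/
abbrev FdMod (K : Type u) [Field K] (R : Type u) [Category.{u} R]
    [Preadditive R] [CategoryTheory.Linear K R] :=
  ObjectProperty.FullSubcategory (IsFdModule K (R := R))

end KGPaper

namespace KGPaper

variable (K : Type u) [Field K]

/-- A full subcategory (given by a set `B` of objects) of a `K`-category `R` is convex
if every path of nonzero morphisms between objects of `B` has all its intermediate
points in `B`. -/
def Convex {R : Type u} [Category.{u} R] [Preadditive R] (B : Set R) : Prop :=
  ∀ (n : ℕ) (z : Fin (n + 2) → R), z 0 ∈ B → z (Fin.last (n + 1)) ∈ B →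
    (∀ i : Fin (n + 1), ∃ f : z i.castSucc ⟶ z i.succ, f ≠ 0) → ∀ i, z i ∈ B

/-- A full subcategory `X` (given as a set of objects) of `mod(R)` is contravariantly
finite if for every `M ∈ mod(R)` there are finitely many homomorphisms `αᵢ : Xᵢ ⟶ M`
with `Xᵢ ∈ X` such that every homomorphism `f : Y ⟶ M` with `Y ∈ X` factors through
`[α₁ ... αₙ] : ⊕ᵢ Xᵢ ⟶ M`, i.e. `f = ∑ᵢ hᵢ ≫ αᵢ` for suitable `hᵢ : Y ⟶ Xᵢ`. -/
def ContravariantlyFinite (R : Type u) [Category.{u} R]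
    [Preadditive R] [CategoryTheory.Linear K R] (X : Set (FdMod K R)) : Prop :=
  ∀ M : FdMod K R, ∃ (n : ℕ) (Xi : Fin n → FdMod K R) (α : ∀ i, Xi i ⟶ M),
    (∀ i, Xi i ∈ X) ∧
    ∀ Y ∈ X, ∀ f : Y ⟶ M, ∃ h : ∀ i, Y ⟶ Xi i, f = ∑ i, h i ≫ α i

end KGPaper

/-!
The modules vanishing outside `B` are closed under submodules, so every `M` has a largest
submodule supported on `B`: at `x` it consists of the elements killed by `M(g)` for every
`g : y ⟶ x` with `y ∉ B`. By naturality, every morphism into `M` from a module supported on `B`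
lands in this trace, so its inclusion into `M` is a single right approximation.
-/

namespace KGPaper

section Trace

variable {K : Type u} [Ring K] {R : Type u} [Category.{u} R] (B : Set R)
  (M : Rᵒᵖ ⥤ ModuleCat.{u} K)

def traceSubmodule (x : Rᵒᵖ) : Submodule K (M.obj x) :=
  ⨅ (y : R) (g : y ⟶ unop x) (_ : y ∉ B), LinearMap.ker (M.map g.op).hom

variable {B M} in
lemma mem_traceSubmodule {x : Rᵒᵖ} {m : M.obj x} :
    m ∈ traceSubmodule B M x ↔ ∀ (y : R) (g : y ⟶ unop x), y ∉ B → M.map g.op m = 0 := by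
  simp [traceSubmodule]

variable {B M} in
lemma map_mem_traceSubmodule {x y : Rᵒᵖ} (f : x ⟶ y) {m : M.obj x}
    (hm : m ∈ traceSubmodule B M x) : M.map f m ∈ traceSubmodule B M y := by
  rw [mem_traceSubmodule] at hm ⊢
  intro z g hz
  have := hm z (g ≫ f.unop) hz
  rwa [op_comp, Quiver.Hom.op_unop, M.map_comp, ModuleCat.comp_apply] at this

def traceFunctor : Rᵒᵖ ⥤ ModuleCat.{u} K where
  obj x := ModuleCat.of K (traceSubmodule B M x)
  map f := ModuleCat.ofHom ((M.map f).hom.restrict fun _ => map_mem_traceSubmodule f)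
  map_id x := by ext m; simp
  map_comp f g := by ext m; simp

def traceι : traceFunctor B M ⟶ M where
  app x := ModuleCat.ofHom (traceSubmodule B M x).subtype

lemma traceSubmodule_eq_bot {x : R} (hx : x ∉ B) : traceSubmodule B M (op x) = ⊥ :=
  (Submodule.eq_bot_iff _).2 fun _ hm => by simpa using mem_traceSubmodule.mp hm x (𝟙 x) hx

lemma isZero_traceFunctor_obj {x : R} (hx : x ∉ B) : IsZero ((traceFunctor B M).obj (op x)) := by
  have := Submodule.subsingleton_iff_eq_bot.2 (traceSubmodule_eq_bot B M hx)
  exact ModuleCat.isZero_of_subsingleton (ModuleCat.of K (traceSubmodule B M (op x)))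

variable {B M} in
lemma app_mem_traceSubmodule {Y : Rᵒᵖ ⥤ ModuleCat.{u} K}
    (hY : ∀ x, x ∉ B → IsZero (Y.obj (op x))) (f : Y ⟶ M) (x : Rᵒᵖ) (m : Y.obj x) :
    f.app x m ∈ traceSubmodule B M x := by
  refine mem_traceSubmodule.2 fun y g hy => ?_
  have := ModuleCat.subsingleton_of_isZero (hY y hy)
  rw [← ModuleCat.comp_apply, ← f.naturality, ModuleCat.comp_apply,
    Subsingleton.elim (Y.map g.op m) 0, map_zero]

variable {B M} in
def traceLift {Y : Rᵒᵖ ⥤ ModuleCat.{u} K} (hY : ∀ x, x ∉ B → IsZero (Y.obj (op x)))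
    (f : Y ⟶ M) : Y ⟶ traceFunctor B M where
  app x := ModuleCat.ofHom ((f.app x).hom.codRestrict _ (app_mem_traceSubmodule hY f x))
  naturality x y g := by
    ext m
    exact Subtype.ext (ConcreteCategory.congr_hom (f.naturality g) m)

lemma traceLift_traceι {Y : Rᵒᵖ ⥤ ModuleCat.{u} K} (hY : ∀ x, x ∉ B → IsZero (Y.obj (op x)))
    (f : Y ⟶ M) : traceLift hY f ≫ traceι B M = f := by
  ext
  rfl

end Trace

variable {K R : Type u} [Field K] [Category.{u} R] [Preadditive R] [CategoryTheory.Linear K R]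

lemma isFdModule_traceFunctor (B : Set R) {M : BigMod K R} (hM : IsFdModule K M) :
    IsFdModule K (traceFunctor B M) := by
  obtain ⟨hAdd, hLin, hFd, hFin⟩ := hM
  refine ⟨⟨fun {x y f g} => ?_⟩, fun c f => ?_, fun x => ?_, hFin.subset fun x hx hMx => hx ?_⟩
  · exact ModuleCat.hom_ext <| LinearMap.ext fun m =>
      Subtype.ext (ConcreteCategory.congr_hom M.map_add m.1)
  · exact ModuleCat.hom_ext <| LinearMap.ext fun m =>
      Subtype.ext (ConcreteCategory.congr_hom (hLin c f) m.1)
  · exact FiniteDimensional.finiteDimensional_submodule _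
  · have := ModuleCat.subsingleton_of_isZero hMx
    exact ModuleCat.isZero_of_subsingleton (ModuleCat.of K (traceSubmodule B M (op x)))

lemma contravariantlyFinite_of_forall_exists_factor {X : Set (FdMod K R)}
    (h : ∀ M, ∃ (A : FdMod K R) (α : A ⟶ M), A ∈ X ∧
      ∀ Y ∈ X, ∀ f : Y ⟶ M, ∃ g : Y ⟶ A, g ≫ α = f) :
    ContravariantlyFinite K R X := by
  intro M
  obtain ⟨A, α, hA, hα⟩ := h M
  refine ⟨1, fun _ => A, fun _ => α, fun _ => hA, fun Y hY f => ?_⟩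
  obtain ⟨g, rfl⟩ := hα Y hY f
  exact ⟨fun _ => g, by simp⟩

theorem contravariantlyFinite_of_convex_general
    (K R : Type u) [Field K] [Category.{u} R] [Preadditive R]
    [CategoryTheory.Linear K R]
    (B : Set R) :
    ContravariantlyFinite K R
      {M : FdMod K R | ∀ x : R, x ∉ B → IsZero (M.obj.obj (op x))} := by
  refine contravariantlyFinite_of_forall_exists_factor fun M => ?_
  refine ⟨⟨traceFunctor B M.obj, isFdModule_traceFunctor B M.property⟩, ⟨traceι B M.obj⟩,
    fun _ => isZero_traceFunctor_obj B M.obj, fun Y hY f => ⟨⟨traceLift hY f.hom⟩, ?_⟩⟩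
  exact InducedCategory.hom_ext (traceLift_traceι B M.obj hY f.hom)

/-- Let `R` be a locally bounded `K`-category (`K` algebraically
closed) and `B` a convex full subcategory of `R`.  Then `mod(B)`, identified with its
image in `mod(R)` under the fully faithful exact extension-by-zeros functor — that is,
the full subcategory of `mod(R)` of all modules vanishing on all objects outside of
`B` — is a contravariantly finite subcategory of `mod(R)`. -/
theorem contravariantlyFinite_of_convex
    (K R : Type u) [Field K] [IsAlgClosed K] [Category.{u} R] [Preadditive R]
    [CategoryTheory.Linear K R] [LocallyBounded K R]
    (B : Set R) (hB : Convex B) :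
    ContravariantlyFinite K R
      {M : FdMod K R | ∀ x : R, x ∉ B → IsZero (M.obj.obj (op x))} :=
  contravariantlyFinite_of_convex_general K R B

end KGPaper
end
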